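/- arXiv:1611.08370 — 2 statements merged into one kernel-verified Lean document; each statement's English description precedes it below -/
import Mathlib

section
/- Let w ∈ FreeGroup (Fin (n−1)) be a word with det(I_{n−1} − β^r_{n,q}(w)) ≠ 0. Then the braid zeta function ζ(s) = det(I_n − s·β_{n,q}(w))^{−1} has a simple pole at s = 1, and (s − 1)·det(I_n − s·β_{n,q}(w))^{−1} tends to −det(I_{n−1} − β^r_{n,q}(w))^{−1} as s → 1 (s ≠ 1). In particular, since det(I_{n−1} − β^r_{n,q}(σ)) = [n]_q · Δ_{σ̂}(q) when the closure σ̂ of the braid σ is a knot (Burau's theorem), the residue of the braid zeta function at s = 1 equals −(1/[n]_q) · Δ_{σ̂}(q)^{−1}, where [n]_q = (1−q^n)/(1−q) and Δ_{σ̂}(q) is the Alexander polynomial. -/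
open Matrix

/-- The (unreduced) Burau matrix `B_{i+1} = I_i ⊕ [[1−q, 1], [q, 0]] ⊕ I_{n-i-2}`
(the 2×2 block sits in rows/columns `i`, `i+1`, zero-based). -/
noncomputable def burauMatrix (n : ℕ) (q : ℂ) (i : Fin (n - 1)) :
    Matrix (Fin n) (Fin n) ℂ := fun j k =>
  if (j : ℕ) = i ∧ (k : ℕ) = i then 1 - q
  else if (j : ℕ) = i ∧ (k : ℕ) = (i : ℕ) + 1 then 1
  else if (j : ℕ) = (i : ℕ) + 1 ∧ (k : ℕ) = i then q
  else if (j : ℕ) = (i : ℕ) + 1 ∧ (k : ℕ) = (i : ℕ) + 1 then 0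
  else if j = k then 1 else 0

/-- The reduced Burau matrix `B^r_{i+1}` (zero-based generator index `i`): it agrees
with the identity except in row `i`, where the entries at columns `i−1, i, i+1`
are `q, −q, 1` respectively. -/
noncomputable def rBurauMatrix (n : ℕ) (q : ℂ) (i : Fin (n - 1)) :
    Matrix (Fin (n - 1)) (Fin (n - 1)) ℂ := fun j k =>
  if (j : ℕ) = i then
    if (k : ℕ) + 1 = i then q
    else if (k : ℕ) = i then -q
    else if (k : ℕ) = (i : ℕ) + 1 then 1
    else 0
  else if j = k then 1 else 0

/-!
`B_i − 1` has rank one: it is `P E_i`, where `P` is the change of basis `e_k ↦ e_k − e_{k+1}` and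
`E_i` is supported on row `i`. Hence `B_i P = P (1 + E_i P)`, and `1 + E_i P` is block upper
triangular with diagonal blocks `B^r_i` and `1`. Such block matrices form a group, so for every
word `w` the matrix `β(w)` is conjugate to a block matrix with diagonal blocks `β^r(w)` and `1`,
whence `det(1 − s β(w)) = (1 − s) det(1 − s β^r(w))` and the residue at `s = 1` can be read off.
-/

open Filter Topology

lemma Fin.sum_ite_val_eq {M : Type*} [AddCommMonoid M] {n : ℕ} (f : Fin n → M) (m : ℕ) :
    (∑ l : Fin n, if (l : ℕ) = m then f l else 0) = if h : m < n then f ⟨m, h⟩ else 0 := by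
  split_ifs with h
  · have hval (l : Fin n) : (l : ℕ) = m ↔ l = ⟨m, h⟩ := by rw [Fin.ext_iff]
    simp only [hval, Finset.sum_ite_eq', Finset.mem_univ, if_true]
  · refine Finset.sum_eq_zero fun l _ => if_neg ?_
    omega

section

variable {R : Type*} [CommRing R]

def finSumFinOneEquiv {n : ℕ} (hn : 0 < n) : Fin (n - 1) ⊕ Fin 1 ≃ Fin n :=
  finSumFinEquiv.trans (finCongr (by omega))

lemma finSumFinOneEquiv_symm_apply {n : ℕ} (hn : 0 < n) (m : Fin n) :
    (finSumFinOneEquiv hn).symm m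
      = if h : (m : ℕ) < n - 1 then Sum.inl ⟨m, h⟩ else Sum.inr 0 := by
  rw [Equiv.symm_apply_eq]
  split_ifs with h
  · ext; simp [finSumFinOneEquiv]
  · ext; simp [finSumFinOneEquiv]; omega

/-- The block matrix `[[A, c], [0, 1]]`, its last row and column indexed by the last element
of `Fin n`. -/
def affineMatrix {n : ℕ} (hn : 0 < n) (A : Matrix (Fin (n - 1)) (Fin (n - 1)) R)
    (c : Matrix (Fin (n - 1)) (Fin 1) R) : Matrix (Fin n) (Fin n) R :=
  reindex (finSumFinOneEquiv hn) (finSumFinOneEquiv hn) (fromBlocks A c 0 1)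

lemma affineMatrix_apply {n : ℕ} (hn : 0 < n) (A : Matrix (Fin (n - 1)) (Fin (n - 1)) R)
    (c : Matrix (Fin (n - 1)) (Fin 1) R) (j k : Fin n) :
    affineMatrix hn A c j k
      = if hj : (j : ℕ) < n - 1 then
          (if hk : (k : ℕ) < n - 1 then A ⟨j, hj⟩ ⟨k, hk⟩ else c ⟨j, hj⟩ 0)
        else (if (k : ℕ) < n - 1 then 0 else 1) := by
  rw [affineMatrix, reindex_apply, submatrix_apply, finSumFinOneEquiv_symm_apply,
    finSumFinOneEquiv_symm_apply]
  split_ifs <;> simp [fromBlocks]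

lemma affineMatrix_mul {n : ℕ} (hn : 0 < n) (A B : Matrix (Fin (n - 1)) (Fin (n - 1)) R)
    (c d : Matrix (Fin (n - 1)) (Fin 1) R) :
    affineMatrix hn A c * affineMatrix hn B d = affineMatrix hn (A * B) (A * d + c) := by
  rw [affineMatrix, affineMatrix, affineMatrix, reindex_apply, reindex_apply, reindex_apply,
    submatrix_mul_equiv, fromBlocks_multiply]
  congr 1
  simp

lemma affineMatrix_one {n : ℕ} (hn : 0 < n) : affineMatrix hn (1 : Matrix _ _ R) 0 = 1 := by
  rw [affineMatrix, fromBlocks_one, reindex_apply, submatrix_one_equiv]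

lemma det_one_sub_smul_affineMatrix {n : ℕ} (hn : 0 < n)
    (A : Matrix (Fin (n - 1)) (Fin (n - 1)) R) (c : Matrix (Fin (n - 1)) (Fin 1) R) (s : R) :
    (1 - s • affineMatrix hn A c).det = (1 - s) * (1 - s • A).det := by
  have hblocks : 1 - s • fromBlocks A c 0 (1 : Matrix (Fin 1) (Fin 1) R)
      = fromBlocks (1 - s • A) (-(s • c)) 0 (1 - s • 1) := by
    rw [← fromBlocks_one, fromBlocks_smul, sub_eq_add_neg, fromBlocks_neg, fromBlocks_add]
    simp [sub_eq_add_neg]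
  have hreindex : 1 - s • affineMatrix hn A c
      = reindex (finSumFinOneEquiv hn) (finSumFinOneEquiv hn) (1 - s • fromBlocks A c 0 1) := by
    simp [affineMatrix, submatrix_sub, submatrix_smul, submatrix_one_equiv]
  rw [hreindex, hblocks, det_reindex_self, det_fromBlocks_zero₂₁, det_fin_one, mul_comm]
  simp

/-- The change of basis `e_k ↦ e_k - e_{k+1}`. -/
def diffMatrix (n : ℕ) : Matrix (Fin n) (Fin n) R :=
  fun j k => (if j = k then 1 else 0) - (if (j : ℕ) = (k : ℕ) + 1 then 1 else 0)

lemma mul_diffMatrix_apply {n : ℕ} (M : Matrix (Fin n) (Fin n) R) (j k : Fin n) :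
    (M * diffMatrix n : Matrix (Fin n) (Fin n) R) j k
      = M j k - (if h : (k : ℕ) + 1 < n then M j ⟨(k : ℕ) + 1, h⟩ else 0) := by
  simp only [mul_apply, diffMatrix, mul_sub, mul_ite, mul_one, mul_zero, Finset.sum_sub_distrib,
    Finset.sum_ite_eq', Finset.mem_univ, if_true, Fin.sum_ite_val_eq (M j)]

lemma diffMatrix_mul_apply {n : ℕ} (M : Matrix (Fin n) (Fin n) R) (j k : Fin n) :
    (diffMatrix n * M : Matrix (Fin n) (Fin n) R) j k
      = M j k - (if h : 0 < (j : ℕ) then M ⟨(j : ℕ) - 1, by omega⟩ k else 0) := by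
  have hpred (l : Fin n) : (j : ℕ) = (l : ℕ) + 1 ↔ 0 < (j : ℕ) ∧ (l : ℕ) = (j : ℕ) - 1 := by
    omega
  simp only [mul_apply, diffMatrix, sub_mul, ite_mul, one_mul, zero_mul, Finset.sum_sub_distrib,
    Finset.sum_ite_eq, Finset.mem_univ, if_true, hpred, ite_and]
  congr 1
  split_ifs
  · rw [Fin.sum_ite_val_eq (M · k), dif_pos (by omega)]
  · simp

lemma det_diffMatrix (n : ℕ) : (diffMatrix n : Matrix (Fin n) (Fin n) R).det = 1 := by
  rw [det_of_isLowerTriangular _ fun i j (hij : i < j) => ?_]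
  · simp [diffMatrix]
  · simp only [diffMatrix]
    rw [if_neg hij.ne, if_neg (by omega), sub_zero]

lemma det_one_sub_smul_eq_of_mul_eq_mul {ι : Type*} [Fintype ι] [DecidableEq ι]
    {M N P : Matrix ι ι R} (hP : IsUnit P.det) (h : M * P = P * N) (s : R) :
    (1 - s • M).det = (1 - s • N).det := by
  have hconj : (1 - s • M) * P = P * (1 - s • N) := by
    rw [sub_mul, mul_sub, one_mul, mul_one, smul_mul_assoc, h, mul_smul_comm]
  have hdet := congrArg det hconj
  rw [det_mul, det_mul, mul_comm] at hdet
  exact hP.mul_left_cancel hdet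

def diffConjAffineSubgroup {n : ℕ} (hn : 0 < n) :
    Subgroup (GL (Fin n) R × GL (Fin (n - 1)) R) where
  carrier :=
    {p | ∃ c, (p.1 : Matrix _ _ R) * diffMatrix n = diffMatrix n * affineMatrix hn p.2 c}
  one_mem' := ⟨0, by simp [affineMatrix_one]⟩
  mul_mem' := by
    rintro ⟨M, A⟩ ⟨N, B⟩ ⟨c, hc⟩ ⟨d, hd⟩
    refine ⟨(A : Matrix _ _ R) * d + c, ?_⟩
    simp only [Prod.fst_mul, Prod.snd_mul, GeneralLinearGroup.coe_mul] at hc hd ⊢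
    rw [mul_assoc, hd, ← mul_assoc, hc, mul_assoc]
    exact congrArg _ (affineMatrix_mul hn _ _ _ _)
  inv_mem' := by
    rintro ⟨M, A⟩ ⟨c, hc⟩
    set c' := -((↑(A⁻¹) : Matrix (Fin (n - 1)) (Fin (n - 1)) R) * c)
    have hcancel : affineMatrix hn (A : Matrix _ _ R) c * affineMatrix hn (↑A⁻¹) c' = 1 := by
      rw [affineMatrix_mul, Matrix.mul_neg, ← Matrix.mul_assoc, ← Units.val_mul, mul_inv_cancel,
        Units.val_one, Matrix.one_mul, neg_add_cancel, affineMatrix_one]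
    refine ⟨c', ?_⟩
    calc (↑(M⁻¹) : Matrix (Fin n) (Fin n) R) * diffMatrix n
        = ↑M⁻¹ * (↑M * diffMatrix n) * affineMatrix hn (↑A⁻¹) c' := by
          rw [hc, mul_assoc, mul_assoc, hcancel, mul_one]
      _ = diffMatrix n * affineMatrix hn (↑A⁻¹) c' := by
          rw [← mul_assoc, ← Units.val_mul, inv_mul_cancel, Units.val_one, one_mul]

end

def burauRow {n : ℕ} (q : ℂ) (i : Fin (n - 1)) : Matrix (Fin n) (Fin n) ℂ :=
  fun j k => if (j : ℕ) = i then
    (if (k : ℕ) = (i : ℕ) + 1 then 1 else if (k : ℕ) = i then -q else 0) else 0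

lemma burauMatrix_eq_one_add {n : ℕ} (q : ℂ) (i : Fin (n - 1)) :
    burauMatrix n q i = 1 + diffMatrix n * burauRow q i := by
  ext j k
  have := i.isLt
  rw [Matrix.add_apply, diffMatrix_mul_apply, one_apply]
  simp only [burauMatrix, burauRow, Fin.ext_iff]
  split_ifs <;> first | omega | ring

lemma affineMatrix_rBurauMatrix {n : ℕ} (hn : 0 < n) (q : ℂ) (i : Fin (n - 1)) :
    affineMatrix hn (rBurauMatrix n q i)
      (of fun l _ => if (l : ℕ) = i ∧ (i : ℕ) + 2 = n then 1 else 0)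
      = 1 + burauRow q i * diffMatrix n := by
  ext j k
  have := i.isLt
  rw [Matrix.add_apply, mul_diffMatrix_apply, one_apply, affineMatrix_apply]
  simp only [rBurauMatrix, burauRow, of_apply, Fin.ext_iff]
  split_ifs <;> first | omega | ring

lemma burauMatrix_mul_diffMatrix {n : ℕ} (hn : 0 < n) (q : ℂ) (i : Fin (n - 1)) :
    burauMatrix n q i * diffMatrix n = diffMatrix n * affineMatrix hn (rBurauMatrix n q i)
      (of fun l _ => if (l : ℕ) = i ∧ (i : ℕ) + 2 = n then 1 else 0) := by
  rw [affineMatrix_rBurauMatrix, burauMatrix_eq_one_add, add_mul, mul_add, one_mul, mul_one,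
    mul_assoc]

lemma burau_mem_diffConjAffineSubgroup {n : ℕ} (hn : 0 < n) (q : ℂ)
    (β : FreeGroup (Fin (n - 1)) →* GL (Fin n) ℂ)
    (hβ : ∀ i, (β (FreeGroup.of i) : Matrix (Fin n) (Fin n) ℂ) = burauMatrix n q i)
    (βr : FreeGroup (Fin (n - 1)) →* GL (Fin (n - 1)) ℂ)
    (hβr : ∀ i, (βr (FreeGroup.of i) : Matrix _ _ ℂ) = rBurauMatrix n q i)
    (w : FreeGroup (Fin (n - 1))) :
    (β w, βr w) ∈ diffConjAffineSubgroup hn := by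
  have hgen : Subgroup.closure (Set.range FreeGroup.of)
      ≤ (diffConjAffineSubgroup hn).comap (β.prod βr) := by
    rw [Subgroup.closure_le]
    rintro _ ⟨i, rfl⟩
    exact ⟨_, by simpa [hβ, hβr] using burauMatrix_mul_diffMatrix hn q i⟩
  rw [FreeGroup.closure_range_of] at hgen
  exact hgen (Subgroup.mem_top w)

lemma det_one_sub_smul_burau {n : ℕ} (hn : 0 < n) (q : ℂ)
    (β : FreeGroup (Fin (n - 1)) →* GL (Fin n) ℂ)
    (hβ : ∀ i, (β (FreeGroup.of i) : Matrix (Fin n) (Fin n) ℂ) = burauMatrix n q i)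
    (βr : FreeGroup (Fin (n - 1)) →* GL (Fin (n - 1)) ℂ)
    (hβr : ∀ i, (βr (FreeGroup.of i) : Matrix _ _ ℂ) = rBurauMatrix n q i)
    (w : FreeGroup (Fin (n - 1))) (s : ℂ) :
    (1 - s • (β w : Matrix (Fin n) (Fin n) ℂ)).det
      = (1 - s) * (1 - s • (βr w : Matrix (Fin (n - 1)) (Fin (n - 1)) ℂ)).det := by
  obtain ⟨c, hc⟩ := burau_mem_diffConjAffineSubgroup hn q β hβ βr hβr w
  rw [det_one_sub_smul_eq_of_mul_eq_mul (by simp [det_diffMatrix]) hc,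
    det_one_sub_smul_affineMatrix]

lemma tendsto_sub_one_mul_inv_one_sub_mul {𝕜 : Type*} [NormedField 𝕜] {g : 𝕜 → 𝕜}
    (hg : ContinuousAt g 1) (hg1 : g 1 ≠ 0) :
    Tendsto (fun s => (s - 1) * ((1 - s) * g s)⁻¹) (𝓝[≠] 1) (𝓝 (-(g 1)⁻¹)) := by
  refine ((hg.inv₀ hg1).neg.mono_left nhdsWithin_le_nhds).congr' ?_
  filter_upwards [self_mem_nhdsWithin] with s (hs : s ≠ 1)
  rw [mul_inv, ← mul_assoc, ← neg_sub, neg_mul, mul_inv_cancel₀ (sub_ne_zero.mpr hs.symm),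
    neg_one_mul, Pi.neg_apply, Pi.inv_apply]

open Topology in
theorem braid_zeta_residue_general (n : ℕ) (hn : 2 ≤ n) (q : ℂ)
    (β : FreeGroup (Fin (n - 1)) →* GL (Fin n) ℂ)
    (hβ : ∀ i, (β (FreeGroup.of i) : Matrix (Fin n) (Fin n) ℂ) = burauMatrix n q i)
    (βr : FreeGroup (Fin (n - 1)) →* GL (Fin (n - 1)) ℂ)
    (hβr : ∀ i, (βr (FreeGroup.of i) : Matrix (Fin (n - 1)) (Fin (n - 1)) ℂ) = rBurauMatrix n q i)
    (w : FreeGroup (Fin (n - 1)))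
    (hw : ((1 : Matrix (Fin (n - 1)) (Fin (n - 1)) ℂ)
        - (βr w : Matrix (Fin (n - 1)) (Fin (n - 1)) ℂ)).det ≠ 0) :
    Filter.Tendsto
      (fun s : ℂ => (s - 1) *
        (((1 : Matrix (Fin n) (Fin n) ℂ) - s • (β w : Matrix (Fin n) (Fin n) ℂ)).det)⁻¹)
      (𝓝[≠] (1 : ℂ))
      (𝓝 (-(((1 : Matrix (Fin (n - 1)) (Fin (n - 1)) ℂ)
          - (βr w : Matrix (Fin (n - 1)) (Fin (n - 1)) ℂ)).det)⁻¹)) := by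
  simp only [det_one_sub_smul_burau (by omega) q β hβ βr hβr w]
  have hcont : Continuous fun s : ℂ => (1 - s • (βr w : Matrix (Fin (n - 1)) (Fin (n - 1)) ℂ)).det := by
    fun_prop
  simpa using tendsto_sub_one_mul_inv_one_sub_mul hcont.continuousAt (by simpa using hw)

open Topology in
/-- **Residue of the braid zeta function at `s = 1`.** If `det(I_{n−1} − β^r_{n,q}(w)) ≠ 0`,
then `ζ(s) = det(I_n − s·β_{n,q}(w))⁻¹` has a simple pole at `s = 1`:
`(s − 1)·ζ(s) → −det(I_{n−1} − β^r_{n,q}(w))⁻¹` as `s → 1`, `s ≠ 1`.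
(By Burau's theorem `det(I_{n−1} − β^r_{n,q}(σ)) = [n]_q·Δ_{σ̂}(q)` when the closure
`σ̂` is a knot, so this residue equals `−(1/[n]_q)·Δ_{σ̂}(q)⁻¹`.) -/
theorem braid_zeta_residue (n : ℕ) (hn : 2 ≤ n) (q : ℂ) (hq : q ≠ 0)
    (β : FreeGroup (Fin (n - 1)) →* GL (Fin n) ℂ)
    (hβ : ∀ i, (β (FreeGroup.of i) : Matrix (Fin n) (Fin n) ℂ) = burauMatrix n q i)
    (βr : FreeGroup (Fin (n - 1)) →* GL (Fin (n - 1)) ℂ)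
    (hβr : ∀ i, (βr (FreeGroup.of i) : Matrix (Fin (n - 1)) (Fin (n - 1)) ℂ) = rBurauMatrix n q i)
    (w : FreeGroup (Fin (n - 1)))
    (hw : ((1 : Matrix (Fin (n - 1)) (Fin (n - 1)) ℂ)
        - (βr w : Matrix (Fin (n - 1)) (Fin (n - 1)) ℂ)).det ≠ 0) :
    Filter.Tendsto
      (fun s : ℂ => (s - 1) *
        (((1 : Matrix (Fin n) (Fin n) ℂ) - s • (β w : Matrix (Fin n) (Fin n) ℂ)).det)⁻¹)
      (𝓝[≠] (1 : ℂ))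
      (𝓝 (-(((1 : Matrix (Fin (n - 1)) (Fin (n - 1)) ℂ)
          - (βr w : Matrix (Fin (n - 1)) (Fin (n - 1)) ℂ)).det)⁻¹)) :=
  braid_zeta_residue_general n hn q β hβ βr hβr w hw
end

section
/- Let n ≥ 2 and m ∈ ℤ with gcd(n, |m|) = 1. Then for every q ∈ ℂ with q ≠ 0 and every s ∈ ℂ, (1 − q^m s) · det(I_n − s · T_{n,m}) = (1 − s)(1 − q^{nm} s^n). Equivalently, the braid zeta function of the torus type braid satisfies ζ(s, σ_{n,m}; β_{n,q}) = (1 − q^m s) / ((1 − s)(1 − q^{nm} s^n)). -/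
open Matrix

/-- The Burau image `B_1 B_2 ⋯ B_{n−1}` of the braid `σ_1 σ_2 ⋯ σ_{n−1}`. -/
noncomputable def burauProd (n : ℕ) (q : ℂ) : Matrix (Fin n) (Fin n) ℂ :=
  ((List.finRange (n - 1)).map (burauMatrix n q)).prod

/-- The torus type braid matrix `T_{n,m} = (B_1 ⋯ B_{n−1})^m`, the Burau image of
`σ_{n,m} = (σ_1⋯σ_{n−1})^m`. -/
noncomputable def torusBurau (n : ℕ) (q : ℂ) (m : ℤ) : Matrix (Fin n) (Fin n) ℂ :=
  burauProd n q ^ m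

/-!
Write `𝟙` for the all-ones vector. The product `C = B_1 ⋯ B_{n-1}` is `q P + (1 - q) e₀ 𝟙ᵀ`,
where `P` is the cyclic shift `x ↦ x - 1` on `ℤ/n`, and `𝟙ᵀ C = 𝟙ᵀ`. Matrices of the form
`c P + (constant rows)` with `𝟙ᵀ X = 𝟙ᵀ` are closed under products and inverses, so
`T = C^m = q^m P^m + D` with `D` of constant rows and `𝟙ᵀ T = 𝟙ᵀ`. Replacing a row of a matrix
by the sum of all rows scales its determinant by the common column sum, which gives
`(1 - q^m s) det(1 - sT) = (1 - s) det(1 - q^m s P^m)`. As `gcd(n, m) = 1`, `P^m` is the shift by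
a generator of `ℤ/n`; its powers below the `n`-th have disjoint supports, so no nonzero polynomial
of degree `< n` annihilates it and its characteristic polynomial is `X^n - 1`. Hence
`det(1 - t P^m) = 1 - t^n`.
-/

open Polynomial

namespace Matrix

variable {ι R : Type*} [CommRing R]

def IsRowConst (D : Matrix ι ι R) : Prop := ∀ i j k, D i j = D i k

namespace IsRowConst

variable {D E : Matrix ι ι R}

theorem add (hD : D.IsRowConst) (hE : E.IsRowConst) : (D + E).IsRowConst := fun i j k => by
  simp only [add_apply, hD i j k, hE i j k]

theorem smul (hD : D.IsRowConst) (c : R) : (c • D).IsRowConst := fun i j k => by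
  simp only [smul_apply, hD i j k]

variable [Fintype ι]

theorem mul_left (hD : D.IsRowConst) (A : Matrix ι ι R) : (A * D).IsRowConst := fun i j k => by
  simp only [mul_apply, hD _ j k]

theorem mul_right (hD : D.IsRowConst) {Y : Matrix ι ι R} {a : R} (hY : 1 ᵥ* Y = a • 1) :
    (D * Y).IsRowConst := fun i j k => by
  have hsum : ∀ l, ∑ x, Y x l = a := fun l => by simpa [vecMul, dotProduct] using congrFun hY l
  simp only [mul_apply, hD i _ j, ← Finset.mul_sum, hsum]

end IsRowConst

variable [Fintype ι] [DecidableEq ι]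

theorem det_eq_mul_det_updateRow_one {X : Matrix ι ι R} {a : R} (hX : 1 ᵥ* X = a • 1) (i : ι) :
    X.det = a * (X.updateRow i 1).det := by
  have h := det_updateRow_sum X i 1
  rwa [← vecMul_eq_sum, hX, det_updateRow_smul, Pi.one_apply, one_smul, eq_comm] at h

theorem vecMul_pow_eq_self {v : ι → R} {X : Matrix ι ι R} (h : v ᵥ* X = v) (k : ℕ) :
    v ᵥ* X ^ k = v := by
  induction k with
  | zero => rw [pow_zero, vecMul_one]
  | succ k ih => rw [pow_succ, ← vecMul_vecMul, ih, h]

theorem vecMul_nonsing_inv_eq_self {v : ι → R} {X : Matrix ι ι R} (hX : IsUnit X.det)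
    (h : v ᵥ* X = v) : v ᵥ* X⁻¹ = v := by
  conv_lhs => rw [← h]
  rw [vecMul_vecMul, mul_nonsing_inv _ hX, vecMul_one]

theorem vecMul_zpow_eq_self {v : ι → R} {X : Matrix ι ι R} (hX : IsUnit X.det)
    (h : v ᵥ* X = v) (m : ℤ) : v ᵥ* X ^ m = v := by
  cases m with
  | ofNat k => rw [Int.ofNat_eq_natCast, zpow_natCast, vecMul_pow_eq_self h]
  | negSucc k =>
    rw [zpow_negSucc, ← inv_pow', vecMul_pow_eq_self (vecMul_nonsing_inv_eq_self hX h)]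

namespace IsRowConst

variable {D X P : Matrix ι ι R} {c : R}

theorem pow_sub_smul_pow {a : R} (hXP : (X - c • P).IsRowConst) (hX : 1 ᵥ* X = a • 1) (k : ℕ) :
    (X ^ k - c ^ k • P ^ k).IsRowConst := by
  induction k with
  | zero =>
    rw [pow_zero, pow_zero, pow_zero, one_smul, sub_self]
    exact fun _ _ _ => rfl
  | succ k ih =>
    have h : X ^ (k + 1) - c ^ (k + 1) • P ^ (k + 1)
        = (X ^ k - c ^ k • P ^ k) * X + (c ^ k • P ^ k) * (X - c • P) := by
      simp only [pow_succ, Matrix.sub_mul, Matrix.mul_sub, Matrix.smul_mul, Matrix.mul_smul]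
      module
    rw [h]
    exact (ih.mul_right hX).add (hXP.mul_left _)

theorem mul_det_add [Nonempty ι] {A : Matrix ι ι R} (hD : D.IsRowConst) {a b : R}
    (hA : 1 ᵥ* A = a • 1) (hAD : 1 ᵥ* (A + D) = b • 1) : a * (A + D).det = b * A.det := by
  obtain ⟨i⟩ := ‹Nonempty ι›
  have h : ((A + D).updateRow i 1).det = (A.updateRow i 1).det := by
    refine det_eq_of_forall_row_eq_smul_add_const (fun j => if j = i then 0 else D j i) i
      (if_pos rfl) fun j k => ?_
    by_cases hj : j = i
    · simp [hj]
    · simp [hj, hD j k i]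
  rw [det_eq_mul_det_updateRow_one hAD i, det_eq_mul_det_updateRow_one hA i, h]
  ring

theorem mul_det_one_sub_smul [Nonempty ι] (hXP : (X - c • P).IsRowConst) (hX : 1 ᵥ* X = 1)
    (hP : 1 ᵥ* P = 1) (s : R) :
    (1 - c * s) * (1 - s • X).det = (1 - s) * (1 - (c * s) • P).det := by
  have h := (hXP.smul (-s)).mul_det_add (A := 1 - (c * s) • P) (a := 1 - c * s) (b := 1 - s)
    (by rw [vecMul_sub, vecMul_one, vecMul_smul, hP, sub_smul, one_smul])
    (by rw [vecMul_add, vecMul_sub, vecMul_one, vecMul_smul, vecMul_smul, vecMul_sub,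
      vecMul_smul, hP, hX]; module)
  convert h using 3
  module

variable {K : Type*} [Field K] {X P : Matrix ι ι K} {c : K}

theorem isUnit_det [Nonempty ι] (hc : c ≠ 0) (hXP : (X - c • P).IsRowConst) (hX : 1 ᵥ* X = 1)
    (hP : 1 ᵥ* P = 1) (hPdet : IsUnit P.det) : IsUnit X.det := by
  have h := hXP.mul_det_add (A := c • P) (a := c) (b := 1) (by rw [vecMul_smul, hP])
    (by rw [add_sub_cancel, hX, one_smul])
  rw [add_sub_cancel, one_mul, det_smul] at h
  have hu : IsUnit (c ^ Fintype.card ι * P.det) := (hc.isUnit.pow _).mul hPdet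
  rw [← h] at hu
  exact isUnit_of_mul_isUnit_right hu

theorem inv_sub_smul_inv (hc : c ≠ 0) (hX : IsUnit X.det) (hP : IsUnit P.det)
    (hXP : (X - c • P).IsRowConst) (hXcol : 1 ᵥ* X = 1) : (X⁻¹ - c⁻¹ • P⁻¹).IsRowConst := by
  have h : X⁻¹ - c⁻¹ • P⁻¹ = (-c⁻¹) • (P⁻¹ * (X - c • P) * X⁻¹) := by
    rw [Matrix.mul_sub, Matrix.sub_mul, Matrix.mul_smul, Matrix.smul_mul, nonsing_inv_mul _ hP,
      Matrix.one_mul, Matrix.mul_assoc, mul_nonsing_inv _ hX, Matrix.mul_one, smul_sub, smul_smul,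
      neg_mul, inv_mul_cancel₀ hc, neg_smul, neg_smul, one_smul]
    abel
  rw [h]
  refine ((hXP.mul_left _).mul_right (a := 1) ?_).smul _
  rw [one_smul]
  exact vecMul_nonsing_inv_eq_self hX hXcol

theorem zpow_sub_smul_zpow (hc : c ≠ 0) (hX : IsUnit X.det) (hP : IsUnit P.det)
    (hXP : (X - c • P).IsRowConst) (hXcol : 1 ᵥ* X = 1) (m : ℤ) :
    (X ^ m - c ^ m • P ^ m).IsRowConst := by
  cases m with
  | ofNat k =>
    simp only [Int.ofNat_eq_natCast, zpow_natCast]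
    exact hXP.pow_sub_smul_pow (hXcol.trans (one_smul _ _).symm) k
  | negSucc k =>
    rw [zpow_negSucc, zpow_negSucc, zpow_negSucc, ← inv_pow', ← inv_pow', ← inv_pow]
    refine (hXP.inv_sub_smul_inv hc hX hP hXcol).pow_sub_smul_pow (a := 1) ?_ _
    rw [one_smul]
    exact vecMul_nonsing_inv_eq_self hX hXcol

end IsRowConst

theorem mul_single_apply {l m n α : Type*} [Fintype m] [DecidableEq m] [DecidableEq n]
    [NonUnitalNonAssocSemiring α] (M : Matrix l m α) (i : m) (j : n) (c : α) (a : l) (b : n) :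
    (M * single i j c) a b = if b = j then M a i * c else 0 := by
  split_ifs with h
  · rw [h, mul_single_apply_same]
  · exact mul_single_apply_of_ne c i j a b h M

end Matrix

theorem Nat.Coprime.addOrderOf_zsmul {G : Type*} [AddGroup G] {x : G} {m : ℤ}
    (h : (addOrderOf x).Coprime m.natAbs) : addOrderOf (m • x) = addOrderOf x := by
  rcases Int.natAbs_eq m with hm | hm <;> rw [hm]
  · rw [natCast_zsmul, h.addOrderOf_nsmul]
  · rw [neg_zsmul, natCast_zsmul, addOrderOf_neg, h.addOrderOf_nsmul]

section ShiftMatrix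

variable {G R : Type*} [AddGroup G] [DecidableEq G] [CommRing R]

variable (R) in
def shiftMatrix (a : G) : Matrix G G R := of fun x y => if y = x + a then 1 else 0

theorem shiftMatrix_apply (a x y : G) : shiftMatrix R a x y = if y = x + a then 1 else 0 := rfl

@[simp]
theorem shiftMatrix_zero : shiftMatrix R (0 : G) = 1 := by
  ext x y
  simp [shiftMatrix_apply, one_apply, eq_comm]

variable [Fintype G]

theorem shiftMatrix_mul (a b : G) : shiftMatrix R a * shiftMatrix R b = shiftMatrix R (a + b) := by
  ext x y
  rw [mul_apply, Finset.sum_eq_single (x + a)]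
  · simp [shiftMatrix_apply, add_assoc]
  · intro z _ hz
    simp [shiftMatrix_apply, hz]
  · simp

theorem shiftMatrix_pow (a : G) (k : ℕ) : shiftMatrix R a ^ k = shiftMatrix R (k • a) := by
  induction k with
  | zero => simp
  | succ k ih => rw [pow_succ, ih, shiftMatrix_mul, succ_nsmul]

theorem shiftMatrix_zpow (a : G) (m : ℤ) : shiftMatrix R a ^ m = shiftMatrix R (m • a) := by
  cases m with
  | ofNat k => rw [Int.ofNat_eq_natCast, zpow_natCast, shiftMatrix_pow, natCast_zsmul]
  | negSucc k =>
    rw [zpow_negSucc, shiftMatrix_pow, negSucc_zsmul]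
    exact inv_eq_left_inv (by rw [shiftMatrix_mul, neg_add_cancel, shiftMatrix_zero])

theorem isUnit_det_shiftMatrix (a : G) : IsUnit (shiftMatrix R a).det :=
  isUnit_det_of_right_inverse (B := shiftMatrix R (-a))
    (by rw [shiftMatrix_mul, add_neg_cancel, shiftMatrix_zero])

theorem one_vecMul_shiftMatrix (a : G) : 1 ᵥ* shiftMatrix R a = 1 := by
  ext y
  have h : ∀ x, y = x + a ↔ x = y - a := fun x => by rw [eq_sub_iff_add_eq, eq_comm]
  simp [vecMul, dotProduct, shiftMatrix_apply, h]

theorem eq_zero_of_aeval_shiftMatrix_eq_zero {a : G} (ha : addOrderOf a = Fintype.card G)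
    {p : R[X]} (hp : p.natDegree < Fintype.card G) (h : aeval (shiftMatrix R a) p = 0) :
    p = 0 := by
  ext k
  rw [coeff_zero]
  rcases lt_or_ge k (Fintype.card G) with hk | hk
  · have hentry := congrFun (congrFun h 0) (k • a)
    rw [aeval_eq_sum_range' hp, Matrix.sum_apply, Finset.sum_eq_single k] at hentry
    · simpa [shiftMatrix_pow, shiftMatrix_apply] using hentry
    · intro i hi hik
      rw [shiftMatrix_pow, Matrix.smul_apply, shiftMatrix_apply, zero_add, if_neg, smul_zero]
      refine fun hki => hik (nsmul_injOn_Iio_addOrderOf ?_ ?_ hki.symm) <;>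
        simp_all [Finset.mem_range]
    · simp [hk]
  · exact coeff_eq_zero_of_natDegree_lt (hp.trans_le hk)

theorem charpoly_shiftMatrix [Nontrivial R] {a : G} (ha : addOrderOf a = Fintype.card G) :
    (shiftMatrix R a).charpoly = X ^ Fintype.card G - 1 := by
  have hcard : Fintype.card G ≠ 0 := Fintype.card_ne_zero
  have hchar : (shiftMatrix R a).charpoly.IsMonicOfDegree (Fintype.card G) :=
    ⟨charpoly_natDegree_eq_dim _, charpoly_monic _⟩
  have hcyc : (X ^ Fintype.card G - 1 : R[X]).IsMonicOfDegree (Fintype.card G) :=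
    (isMonicOfDegree_X_pow (R := R) _).sub (by rw [natDegree_one]; omega)
  rw [← sub_eq_zero]
  refine eq_zero_of_aeval_shiftMatrix_eq_zero ha (hchar.natDegree_sub_lt hcard hcyc) ?_
  rw [map_sub, aeval_self_charpoly, map_sub, map_pow, aeval_X, map_one, shiftMatrix_pow,
    card_nsmul_eq_zero, shiftMatrix_zero, sub_self, sub_self]

theorem det_one_sub_smul_shiftMatrix {K : Type*} [Field K] {a : G}
    (ha : addOrderOf a = Fintype.card G) (t : K) :
    (1 - t • shiftMatrix K a).det = 1 - t ^ Fintype.card G := by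
  rcases eq_or_ne t 0 with rfl | ht
  · simp [zero_pow (Fintype.card_ne_zero (α := G))]
  have h : 1 - t • shiftMatrix K a = t • (scalar G t⁻¹ - shiftMatrix K a) := by
    rw [smul_sub, scalar_apply, ← smul_one_eq_diagonal, smul_smul, mul_inv_cancel₀ ht, one_smul]
  rw [h, det_smul, ← eval_charpoly, charpoly_shiftMatrix ha]
  simp [mul_sub, mul_inv_cancel₀ (pow_ne_zero _ ht)]

end ShiftMatrix

noncomputable def burauPartialProd (n : ℕ) (q : ℂ) (k : ℕ) : Matrix (Fin n) (Fin n) ℂ :=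
  of fun i j =>
    if (i : ℕ) = 0 then (if (j : ℕ) < k then 1 - q else if (j : ℕ) = k then 1 else 0)
    else if (i : ℕ) ≤ k then (if (j : ℕ) + 1 = i then q else 0)
    else if i = j then 1 else 0

theorem burauPartialProd_zero (n : ℕ) (q : ℂ) : burauPartialProd n q 0 = 1 := by
  ext i j
  simp only [burauPartialProd, of_apply, one_apply, Fin.ext_iff]
  split_ifs <;> first | rfl | omega

theorem burauMatrix_eq_one_add_single (n : ℕ) (q : ℂ) (k : ℕ) (hk : k < n - 1) :
    burauMatrix n q ⟨k, hk⟩ =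
      1 + single (⟨k, by omega⟩ : Fin n) ⟨k, by omega⟩ (-q)
        + single (⟨k, by omega⟩ : Fin n) ⟨k + 1, by omega⟩ 1
        + single (⟨k + 1, by omega⟩ : Fin n) ⟨k, by omega⟩ q
        + single (⟨k + 1, by omega⟩ : Fin n) ⟨k + 1, by omega⟩ (-1) := by
  ext i j
  simp only [burauMatrix, Matrix.add_apply, one_apply, single_apply, Fin.ext_iff]
  split_ifs <;> first | omega | ring

theorem burauPartialProd_mul_burauMatrix (n : ℕ) (q : ℂ) (k : ℕ) (hk : k < n - 1) :
    burauPartialProd n q k * burauMatrix n q ⟨k, hk⟩ = burauPartialProd n q (k + 1) := by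
  ext i j
  simp only [burauMatrix_eq_one_add_single n q k hk, Matrix.mul_add, Matrix.mul_one,
    Matrix.add_apply, mul_single_apply, burauPartialProd, of_apply, Fin.ext_iff]
  split_ifs <;> first | omega | ring

theorem burauProd_eq_burauPartialProd (n : ℕ) (q : ℂ) :
    burauProd n q = burauPartialProd n q (n - 1) := by
  suffices h : ∀ k ≤ n - 1,
      (((List.finRange (n - 1)).take k).map (burauMatrix n q)).prod = burauPartialProd n q k by
    simpa [burauProd, List.take_of_length_le] using h (n - 1) le_rfl
  intro k hk
  induction k with
  | zero => simp [burauPartialProd_zero]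
  | succ k ih =>
    have hk' : k < n - 1 := by omega
    rw [List.take_add_one, List.map_append, List.prod_append, ih hk'.le,
      List.getElem?_eq_getElem (by simpa using hk')]
    simpa using burauPartialProd_mul_burauMatrix n q k hk'

theorem burauProd_eq_smul_shiftMatrix_add (n : ℕ) (q : ℂ) :
    burauProd (n + 1) q =
      q • shiftMatrix ℂ (-1 : Fin (n + 1)) + of fun i _ => if i = 0 then 1 - q else 0 := by
  rw [burauProd_eq_burauPartialProd]
  ext x y
  have hy : y = x + -1 ↔ y + 1 = x := eq_add_neg_iff_add_eq
  simp only [burauPartialProd, shiftMatrix_apply, hy, Fin.ext_iff, Fin.val_add_one, Fin.val_last,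
    Fin.val_zero, Matrix.add_apply, Matrix.smul_apply, of_apply, add_tsub_cancel_right,
    smul_eq_mul]
  split_ifs <;> first | omega | ring

theorem burauProd_sub_smul_shiftMatrix_isRowConst (n : ℕ) (q : ℂ) :
    (burauProd (n + 1) q - q • shiftMatrix ℂ (-1 : Fin (n + 1))).IsRowConst := by
  rw [burauProd_eq_smul_shiftMatrix_add, add_sub_cancel_left]
  exact fun _ _ _ => rfl

theorem one_vecMul_burauProd (n : ℕ) (q : ℂ) : 1 ᵥ* burauProd (n + 1) q = 1 := by
  rw [burauProd_eq_smul_shiftMatrix_add, vecMul_add, vecMul_smul, one_vecMul_shiftMatrix]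
  ext j
  simp [vecMul, dotProduct]

theorem addOrderOf_zsmul_neg_one {n : ℕ} {m : ℤ} (hnm : Nat.Coprime (n + 1) m.natAbs) :
    addOrderOf (m • (-1 : Fin (n + 1))) = n + 1 := by
  -- `ZMod (n + 1)` is `Fin (n + 1)` by definition
  have hone : addOrderOf (1 : Fin (n + 1)) = n + 1 := ZMod.addOrderOf_one (n + 1)
  rw [Nat.Coprime.addOrderOf_zsmul (by rwa [addOrderOf_neg, hone]), addOrderOf_neg, hone]

/-- **Braid zeta function of the torus type braid.** For `gcd(n, |m|) = 1`,
`(1 − q^m s)·det(I_n − s·T_{n,m}) = (1 − s)(1 − q^{nm} s^n)`, i.e.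
`ζ(s, σ_{n,m}; β_{n,q}) = (1 − q^m s)/((1 − s)(1 − q^{nm} s^n))`. -/
theorem torus_braid_zeta (n : ℕ) (hn : 2 ≤ n) (m : ℤ) (hnm : Nat.Coprime n m.natAbs)
    (q : ℂ) (hq : q ≠ 0) (s : ℂ) :
    (1 - q ^ m * s) * ((1 : Matrix (Fin n) (Fin n) ℂ) - s • torusBurau n q m).det
      = (1 - s) * (1 - q ^ ((n : ℤ) * m) * s ^ n) := by
  obtain ⟨n, rfl⟩ : ∃ k, n = k + 1 := ⟨n - 1, by omega⟩
  have hP := isUnit_det_shiftMatrix (R := ℂ) (-1 : Fin (n + 1))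
  have hPcol := one_vecMul_shiftMatrix (R := ℂ) (-1 : Fin (n + 1))
  have hCP := burauProd_sub_smul_shiftMatrix_isRowConst n q
  have hCcol := one_vecMul_burauProd n q
  have hC := hCP.isUnit_det hq hCcol hPcol hP
  have hgen : addOrderOf (m • (-1 : Fin (n + 1))) = Fintype.card (Fin (n + 1)) := by
    rw [Fintype.card_fin, addOrderOf_zsmul_neg_one hnm]
  rw [torusBurau, (hCP.zpow_sub_smul_zpow hq hC hP hCcol m).mul_det_one_sub_smul
    (vecMul_zpow_eq_self hC hCcol m) (vecMul_zpow_eq_self hP hPcol m), shiftMatrix_zpow,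
    det_one_sub_smul_shiftMatrix hgen, Fintype.card_fin, mul_pow, ← zpow_natCast,
    ← _root_.zpow_mul, mul_comm m]
end
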